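/- For every y, t > 0 and z ≥ 0, the integral ∫₀ᵗ (y·exp(−y²/(2u))/√(2πu³)) · (exp(−z²/(2(t−u)))/√(2π(t−u))) du equals exp(−(y+z)²/(2t))/√(2πt). -/

import Mathlib

/-!
An explicit antiderivative. With `ρ(v) = √v / √(t - v)`, `α_w(v) = (w ρ(v) - y / ρ(v)) / √t` and
`Φ(x) = ∫₀ˣ exp (-s² / 2) ds`, the function
`H(v) = ∑_{w = ±z} exp (-(y + w)² / (2t)) / (2π √t) · Φ(α_w(v))`
has the integrand as derivative on `(0, t)`: the identity
`(y + w)² / t + α_w(v)² = y² / v + w² / (t - v)` makes both Gaussian factors equal to the product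
of the two exponentials of the integrand, and `α_z' + α_{-z}'` produces the Lévy factor.
As `v ↓ 0` both `α_{±z}` tend to `-∞`; as `v ↑ t`, `α_z → ∞` and `α_{-z} → -∞`, so the integral is
`√(2π) exp (-(y + z)² / (2t)) / (2π √t)`. The integrand is nonnegative, so its integrability
comes for free.
-/

open Real Filter MeasureTheory Set Topology Function

lemma integral_eq_sub_of_hasDerivAt_of_tendsto_of_nonneg {f f' : ℝ → ℝ} {a b fa fb : ℝ}
    (hab : a < b) (hderiv : ∀ x ∈ Ioo a b, HasDerivAt f (f' x) x)
    (hpos : ∀ x ∈ Ioo a b, 0 ≤ f' x)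
    (ha : Tendsto f (𝓝[>] a) (𝓝 fa)) (hb : Tendsto f (𝓝[<] b) (𝓝 fb)) :
    ∫ x in a..b, f' x = fb - fa := by
  set F : ℝ → ℝ := update (update f a fa) b fb
  have hFderiv : ∀ x ∈ Ioo a b, HasDerivAt F (f' x) x := by
    refine fun x hx => (hderiv x hx).congr_of_eventuallyEq ?_
    filter_upwards [Ioo_mem_nhds hx.1 hx.2] with _ hy
    simp only [F]
    rw [update_of_ne hy.2.ne, update_of_ne hy.1.ne']
  have hFcont : ContinuousOn F (Icc a b) := by
    rw [continuousOn_update_iff, continuousOn_update_iff, Icc_sdiff_right, Ico_sdiff_left]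
    refine ⟨⟨fun x hx => (hderiv x hx).continuousAt.continuousWithinAt, ?_⟩, ?_⟩
    · exact fun _ => ha.mono_left (nhdsWithin_mono _ Ioo_subset_Ioi_self)
    · rintro -
      refine (hb.congr' ?_).mono_left (nhdsWithin_mono _ Ico_subset_Iio_self)
      filter_upwards [Ioo_mem_nhdsLT hab] with _ hx using (update_of_ne hx.1.ne' _ _).symm
  have hint : IntervalIntegrable f' volume a b :=
    intervalIntegral.intervalIntegrable_deriv_of_nonneg (by rwa [uIcc_of_le hab.le])
      (by simpa [hab.le] using hFderiv) (by simpa [hab.le] using hpos)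
  exact intervalIntegral.integral_eq_sub_of_hasDerivAt_of_tendsto hab hderiv hint ha hb

lemma sqrt_pow {x : ℝ} (hx : 0 ≤ x) (n : ℕ) : √(x ^ n) = √x ^ n := by
  rw [← sqrt_sq (by positivity : 0 ≤ √x ^ n), ← pow_mul, mul_comm, pow_mul, sq_sqrt hx]

noncomputable def levyDensity (y u : ℝ) : ℝ := y * exp (-(y ^ 2) / (2 * u)) / √(2 * π * u ^ 3)

noncomputable def gaussDensity (z u : ℝ) : ℝ := exp (-(z ^ 2) / (2 * u)) / √(2 * π * u)

lemma levyDensity_nonneg {y : ℝ} (hy : 0 ≤ y) (u : ℝ) : 0 ≤ levyDensity y u := by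
  unfold levyDensity; positivity

lemma gaussDensity_nonneg (z u : ℝ) : 0 ≤ gaussDensity z u := by
  unfold gaussDensity; positivity

noncomputable def gaussPrimitive (x : ℝ) : ℝ := ∫ s in (0 : ℝ)..x, exp (-s ^ 2 / 2)

lemma exp_neg_sq_div_two_eq :
    (fun s : ℝ => exp (-s ^ 2 / 2)) = fun s => exp (-(1 / 2) * s ^ 2) := by
  ext s; ring_nf

lemma integrable_exp_neg_sq_div_two : Integrable fun s : ℝ => exp (-s ^ 2 / 2) := by
  rw [exp_neg_sq_div_two_eq]; exact integrable_exp_neg_mul_sq (by norm_num)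

lemma hasDerivAt_gaussPrimitive (x : ℝ) : HasDerivAt gaussPrimitive (exp (-x ^ 2 / 2)) x :=
  intervalIntegral.integral_hasDerivAt_right
    integrable_exp_neg_sq_div_two.intervalIntegrable
    (Continuous.stronglyMeasurableAtFilter (by fun_prop) _ _) (by fun_prop)

lemma continuous_gaussPrimitive : Continuous gaussPrimitive :=
  continuous_iff_continuousAt.2 fun x => (hasDerivAt_gaussPrimitive x).continuousAt

@[simp] lemma gaussPrimitive_zero : gaussPrimitive 0 = 0 := intervalIntegral.integral_same

lemma gaussPrimitive_neg (x : ℝ) : gaussPrimitive (-x) = -gaussPrimitive x := by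
  have := intervalIntegral.integral_comp_neg (a := 0) (b := x) fun s : ℝ => exp (-s ^ 2 / 2)
  simp only [neg_sq, neg_zero] at this
  rw [gaussPrimitive, gaussPrimitive, intervalIntegral.integral_symm, ← this]

lemma tendsto_gaussPrimitive_atTop : Tendsto gaussPrimitive atTop (𝓝 (√(2 * π) / 2)) := by
  have h := intervalIntegral_tendsto_integral_Ioi 0
    integrable_exp_neg_sq_div_two.integrableOn tendsto_id
  rwa [exp_neg_sq_div_two_eq, integral_gaussian_Ioi, ← exp_neg_sq_div_two_eq,
    show π / (1 / 2) = 2 * π by ring] at h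

lemma tendsto_gaussPrimitive_atBot : Tendsto gaussPrimitive atBot (𝓝 (-(√(2 * π) / 2))) := by
  have h := (tendsto_gaussPrimitive_atTop.comp tendsto_neg_atBot_atTop).neg
  refine h.congr fun x => ?_
  simp [gaussPrimitive_neg]

noncomputable def sqrtRatio (t v : ℝ) : ℝ := √v / √(t - v)

lemma sqrtRatio_pos {t v : ℝ} (hv : 0 < v) (hvt : v < t) : 0 < sqrtRatio t v :=
  div_pos (sqrt_pos.2 hv) (sqrt_pos.2 (sub_pos.2 hvt))

lemma hasDerivAt_sqrtRatio {t v : ℝ} (hv : 0 < v) (hvt : v < t) :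
    HasDerivAt (sqrtRatio t) (t / (2 * √v * √(t - v) ^ 3)) v := by
  have hs : 0 < √v := sqrt_pos.2 hv
  have hr : 0 < √(t - v) := sqrt_pos.2 (sub_pos.2 hvt)
  have hsub : HasDerivAt (fun x => √(t - x)) (-(1 / (2 * √(t - v)))) v := by
    simpa [Function.comp_def] using
      (hasDerivAt_sqrt (sub_pos.2 hvt).ne').comp v ((hasDerivAt_id v).const_sub t)
  refine ((hasDerivAt_sqrt hv.ne').div hsub hr.ne').congr_deriv ?_
  have hst : √v ^ 2 + √(t - v) ^ 2 = t := by
    rw [sq_sqrt hv.le, sq_sqrt (sub_pos.2 hvt).le]; ring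
  field_simp
  linear_combination hst

lemma tendsto_sqrtRatio_nhdsGT_zero {t : ℝ} (ht : 0 < t) :
    Tendsto (sqrtRatio t) (𝓝[>] 0) (𝓝[>] 0) := by
  refine tendsto_nhdsWithin_iff.2 ⟨?_, ?_⟩
  · have hc : ContinuousAt (sqrtRatio t) 0 :=
      continuous_sqrt.continuousAt.div (by fun_prop) (by simpa using (sqrt_pos.2 ht).ne')
    simpa [sqrtRatio] using hc.tendsto.mono_left nhdsWithin_le_nhds
  · filter_upwards [Ioo_mem_nhdsGT ht] with v hv using sqrtRatio_pos hv.1 hv.2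

lemma tendsto_sqrtRatio_nhdsLT {t : ℝ} (ht : 0 < t) : Tendsto (sqrtRatio t) (𝓝[<] t) atTop := by
  have hr : Tendsto (fun v => √(t - v)) (𝓝[<] t) (𝓝[>] 0) := by
    refine tendsto_nhdsWithin_iff.2 ⟨?_, ?_⟩
    · simpa using ((continuous_sub_left t).sqrt.tendsto t).mono_left
        nhdsWithin_le_nhds
    · filter_upwards [self_mem_nhdsWithin] with v hv using sqrt_pos.2 (sub_pos.2 hv)
  have hs : Tendsto (fun v => √v) (𝓝[<] t) (𝓝 √t) :=
    (continuous_sqrt.tendsto t).mono_left nhdsWithin_le_nhds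
  exact (hs.pos_mul_atTop (sqrt_pos.2 ht) hr.inv_tendsto_nhdsGT_zero).congr fun v => rfl

noncomputable def levyGaussArg (t y w v : ℝ) : ℝ := (w * sqrtRatio t v - y / sqrtRatio t v) / √t

lemma tendsto_levyGaussArg_nhdsGT_zero {t y : ℝ} (ht : 0 < t) (hy : 0 < y) (w : ℝ) :
    Tendsto (levyGaussArg t y w) (𝓝[>] 0) atBot := by
  have hρ := tendsto_sqrtRatio_nhdsGT_zero ht
  have hlin : Tendsto (fun v => w * sqrtRatio t v) (𝓝[>] 0) (𝓝 0) := by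
    simpa using (hρ.mono_right nhdsWithin_le_nhds).const_mul w
  have hinv : Tendsto (fun v => y / sqrtRatio t v) (𝓝[>] 0) atTop :=
    (tendsto_inv_nhdsGT_zero.comp hρ).const_mul_atTop hy
  exact (hlin.add_atBot (tendsto_neg_atTop_atBot.comp hinv)).atBot_div_const (sqrt_pos.2 ht)

lemma tendsto_levyGaussArg_nhdsLT_of_pos {t w : ℝ} (ht : 0 < t) (y : ℝ) (hw : 0 < w) :
    Tendsto (levyGaussArg t y w) (𝓝[<] t) atTop := by
  have hρ := tendsto_sqrtRatio_nhdsLT ht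
  exact (((hρ.const_mul_atTop hw).atTop_add (tendsto_const_nhds.div_atTop hρ).neg).congr
    fun v => (sub_eq_add_neg _ _).symm).atTop_div_const (sqrt_pos.2 ht)

lemma tendsto_levyGaussArg_nhdsLT_of_neg {t w : ℝ} (ht : 0 < t) (y : ℝ) (hw : w < 0) :
    Tendsto (levyGaussArg t y w) (𝓝[<] t) atBot := by
  have hρ := tendsto_sqrtRatio_nhdsLT ht
  exact (((hρ.const_mul_atTop_of_neg hw).atBot_add (tendsto_const_nhds.div_atTop hρ).neg).congr
    fun v => (sub_eq_add_neg _ _).symm).atBot_div_const (sqrt_pos.2 ht)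

lemma tendsto_levyGaussArg_zero_nhdsLT {t : ℝ} (ht : 0 < t) (y : ℝ) :
    Tendsto (levyGaussArg t y 0) (𝓝[<] t) (𝓝 0) := by
  have h := ((tendsto_const_nhds (x := y)).div_atTop (tendsto_sqrtRatio_nhdsLT ht)).neg.div_const √t
  rw [neg_zero, zero_div] at h
  exact h.congr fun v => by simp [levyGaussArg]

lemma hasDerivAt_levyGaussArg {t v : ℝ} (hv : 0 < v) (hvt : v < t) (y w : ℝ) :
    HasDerivAt (levyGaussArg t y w)
      ((w + y / sqrtRatio t v ^ 2) * (t / (2 * √v * √(t - v) ^ 3)) / √t) v := by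
  have hρ := hasDerivAt_sqrtRatio hv hvt
  have hinv := (hasDerivAt_const v y).div hρ (sqrtRatio_pos hv hvt).ne'
  refine (((hρ.const_mul w).sub hinv).div_const √t).congr_deriv ?_
  ring

lemma levy_exponent_identity {s r : ℝ} (hs : 0 < s) (hr : 0 < r) (y w : ℝ) :
    -(y + w) ^ 2 / (2 * (s ^ 2 + r ^ 2)) + -((w * (s / r) - y / (s / r)) / √(s ^ 2 + r ^ 2)) ^ 2 / 2
      = -y ^ 2 / (2 * s ^ 2) + -w ^ 2 / (2 * r ^ 2) := by
  have hq : √(s ^ 2 + r ^ 2) ^ 2 = s ^ 2 + r ^ 2 := sq_sqrt (by positivity)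
  rw [div_pow, hq]
  field_simp
  ring

noncomputable def levyGaussWeight (t y w : ℝ) : ℝ := exp (-(y + w) ^ 2 / (2 * t)) / (2 * π * √t)

lemma levyGaussWeight_mul_exp_neg_sq_levyGaussArg {t v : ℝ} (hv : 0 < v) (hvt : v < t) (y w : ℝ) :
    levyGaussWeight t y w * exp (-levyGaussArg t y w v ^ 2 / 2)
      = exp (-y ^ 2 / (2 * v)) * exp (-w ^ 2 / (2 * (t - v))) / (2 * π * √t) := by
  have key := levy_exponent_identity (sqrt_pos.2 hv) (sqrt_pos.2 (sub_pos.2 hvt)) y w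
  rw [sq_sqrt hv.le, sq_sqrt (sub_pos.2 hvt).le, add_sub_cancel] at key
  rw [levyGaussWeight, levyGaussArg, sqrtRatio, div_mul_eq_mul_div, ← exp_add, ← exp_add, key]

lemma levyDensity_mul_gaussDensity {v : ℝ} (hv : 0 ≤ v) (y z t : ℝ) :
    levyDensity y v * gaussDensity z (t - v)
      = y * exp (-y ^ 2 / (2 * v)) * exp (-z ^ 2 / (2 * (t - v)))
          / (2 * π * (√v ^ 3 * √(t - v))) := by
  have h2π : 0 ≤ 2 * π := by positivity
  rw [levyDensity, gaussDensity, sqrt_mul h2π, sqrt_mul h2π, sqrt_pow hv]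
  field_simp
  rw [sq_sqrt h2π]
  ring

noncomputable def levyGaussPrimitive (t y z v : ℝ) : ℝ :=
  levyGaussWeight t y z * gaussPrimitive (levyGaussArg t y z v)
    + levyGaussWeight t y (-z) * gaussPrimitive (levyGaussArg t y (-z) v)

lemma hasDerivAt_levyGaussPrimitive {t v : ℝ} (hv : 0 < v) (hvt : v < t) (y z : ℝ) :
    HasDerivAt (levyGaussPrimitive t y z) (levyDensity y v * gaussDensity z (t - v)) v := by
  have hdiff w := (hasDerivAt_gaussPrimitive _).comp v (hasDerivAt_levyGaussArg hv hvt y w)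
  refine (((hdiff z).const_mul _).add ((hdiff (-z)).const_mul _)).congr_deriv ?_
  rw [← mul_assoc, ← mul_assoc, levyGaussWeight_mul_exp_neg_sq_levyGaussArg hv hvt,
    levyGaussWeight_mul_exp_neg_sq_levyGaussArg hv hvt, neg_sq, levyDensity_mul_gaussDensity hv.le,
    sqrtRatio]
  have hs := sqrt_pos.2 hv
  have hr := sqrt_pos.2 (sub_pos.2 hvt)
  have ht : 0 < t := hv.trans hvt
  field_simp
  rw [sq_sqrt ht.le]
  field_simp
  ring

lemma sqrt_two_pi_mul_levyGaussWeight (t y w : ℝ) :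
    √(2 * π) * levyGaussWeight t y w = gaussDensity (y + w) t := by
  have h2π : 0 < 2 * π := by positivity
  rw [levyGaussWeight, gaussDensity, sqrt_mul h2π.le]
  nth_rewrite 2 [← sq_sqrt h2π.le]
  field_simp

lemma tendsto_levyGaussPrimitive_nhdsGT_zero {t y : ℝ} (ht : 0 < t) (hy : 0 < y) (z : ℝ) :
    Tendsto (levyGaussPrimitive t y z) (𝓝[>] 0)
      (𝓝 (levyGaussWeight t y z * -(√(2 * π) / 2)
        + levyGaussWeight t y (-z) * -(√(2 * π) / 2))) := by
  have hlim w := tendsto_gaussPrimitive_atBot.comp (tendsto_levyGaussArg_nhdsGT_zero ht hy w)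
  exact ((hlim z).const_mul _).add ((hlim (-z)).const_mul _)

lemma tendsto_levyGaussPrimitive_nhdsLT {t z : ℝ} (ht : 0 < t) (hz : 0 ≤ z) (y : ℝ) :
    Tendsto (levyGaussPrimitive t y z) (𝓝[<] t)
      (𝓝 (levyGaussWeight t y z * (√(2 * π) / 2)
        + levyGaussWeight t y (-z) * -(√(2 * π) / 2))) := by
  rcases hz.eq_or_lt with rfl | hz
  · have hlim := (continuous_gaussPrimitive.tendsto 0).comp (tendsto_levyGaussArg_zero_nhdsLT ht y)
    rw [gaussPrimitive_zero] at hlim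
    -- both arguments tend to `0`, and the two weights coincide
    rw [neg_zero, mul_neg, add_neg_cancel]
    simpa using ((hlim.const_mul (levyGaussWeight t y 0)).add
      (hlim.const_mul (levyGaussWeight t y 0))).congr fun v => by simp [levyGaussPrimitive]
  · have hpos := tendsto_gaussPrimitive_atTop.comp (tendsto_levyGaussArg_nhdsLT_of_pos ht y hz)
    have hneg := tendsto_gaussPrimitive_atBot.comp
      (tendsto_levyGaussArg_nhdsLT_of_neg ht y (neg_neg_of_pos hz))
    exact (hpos.const_mul _).add (hneg.const_mul _)

/-- Convolution of the Lévy first-passage density with the Gaussian density. -/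
theorem levy_gaussian_convolution (y z t : ℝ) (hy : 0 < y) (hz : 0 ≤ z) (ht : 0 < t) :
    ∫ u in (0:ℝ)..t,
      (y * Real.exp (-(y ^ 2) / (2 * u)) / Real.sqrt (2 * π * u ^ 3)) *
        (Real.exp (-(z ^ 2) / (2 * (t - u))) / Real.sqrt (2 * π * (t - u))) =
      Real.exp (-((y + z) ^ 2) / (2 * t)) / Real.sqrt (2 * π * t) := by
  change ∫ u in (0:ℝ)..t, levyDensity y u * gaussDensity z (t - u) = gaussDensity (y + z) t
  rw [integral_eq_sub_of_hasDerivAt_of_tendsto_of_nonneg ht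
    (fun v hv => hasDerivAt_levyGaussPrimitive hv.1 hv.2 y z)
    (fun v _ => mul_nonneg (levyDensity_nonneg hy.le v) (gaussDensity_nonneg z (t - v)))
    (tendsto_levyGaussPrimitive_nhdsGT_zero ht hy z) (tendsto_levyGaussPrimitive_nhdsLT ht hz y),
    ← sqrt_two_pi_mul_levyGaussWeight]
  ring
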